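/- arXiv:2010.07536 — 2 statements merged into one kernel-verified Lean document; each statement's English description precedes it below -/
import Mathlib

section
/- Fix reals σ² > 0, O_A ≥ O_U ≥ 0, and R_p ≥ 0, and define I_p and I_s as functions of v ∈ (0, σ²] by I_p(v) = (1/2)·log₂(σ²/v) − (1/2)·log₂((σ²·O_A+1)/(v·O_A+1)) and I_s(v) = (1/2)·log₂((σ²·O_A+1)/(v·O_A+1)) − (1/2)·log₂((σ²·O_U+1)/(v·O_U+1)). Then the maximum of I_s(v) over all v ∈ (0, σ²] satisfying I_p(v) ≤ R_p equals (1/2)·log₂((σ²·O_U·2^(−2R_p) + σ²·O_A·(1−2^(−2R_p)) + 1)/(σ²·O_U + 1)). -/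
/-- For σ² > 0, O_A ≥ O_U ≥ 0 and R_p ≥ 0, the maximum of
I_s(v) = (1/2)·log₂((σ²·O_A+1)/(v·O_A+1)) − (1/2)·log₂((σ²·O_U+1)/(v·O_U+1))
over v ∈ (0, σ²] subject to I_p(v) ≤ R_p equals
(1/2)·log₂((σ²·O_U·2^(−2R_p) + σ²·O_A·(1−2^(−2R_p)) + 1)/(σ²·O_U + 1)). -/
theorem stmt_6 (σ2 OA OU Rp : ℝ) (hσ : 0 < σ2) (hOU : 0 ≤ OU) (hOA : OU ≤ OA) (hR : 0 ≤ Rp) :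
    IsGreatest {x : ℝ | ∃ v ∈ Set.Ioc (0:ℝ) σ2,
        (1/2) * Real.logb 2 (σ2 / v) - (1/2) * Real.logb 2 ((σ2*OA+1)/(v*OA+1)) ≤ Rp ∧
        x = (1/2) * Real.logb 2 ((σ2*OA+1)/(v*OA+1))
            - (1/2) * Real.logb 2 ((σ2*OU+1)/(v*OU+1))}
      ((1/2) * Real.logb 2
        ((σ2*OU*(2:ℝ)^(-(2*Rp)) + σ2*OA*(1 - (2:ℝ)^(-(2*Rp))) + 1)/(σ2*OU+1))) := by
  have hOA0 : 0 ≤ OA := le_trans hOU hOA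
  set t : ℝ := (2:ℝ)^(-(2*Rp)) with ht_def
  have ht0 : 0 < t := Real.rpow_pos_of_pos two_pos _
  have ht1 : t ≤ 1 := Real.rpow_le_one_of_one_le_of_nonpos (by norm_num) (by linarith)
  set D : ℝ := 1 + (1-t)*σ2*OA with hD_def
  have hD1 : (1:ℝ) ≤ D := by
    have : 0 ≤ (1-t)*σ2*OA := mul_nonneg (mul_nonneg (by linarith) hσ.le) hOA0
    rw [hD_def]; linarith
  have hD : 0 < D := by linarith
  set v₀ : ℝ := t*σ2/D with hv0_def
  have hv0 : 0 < v₀ := by positivity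
  have hv0σ : v₀ ≤ σ2 := by
    rw [hv0_def, div_le_iff₀ hD]; nlinarith
  have hAσ : 0 < σ2*OA+1 := by nlinarith
  have hUσ : 0 < σ2*OU+1 := by nlinarith
  have hA0 : 0 < v₀*OA+1 := by nlinarith
  have hU0 : 0 < v₀*OU+1 := by nlinarith
  constructor
  · refine ⟨v₀, ⟨hv0, hv0σ⟩, ?_, ?_⟩
    · have h1 : σ2 / v₀ = D / t := by
        rw [hv0_def]; field_simp
      have h2 : (σ2*OA+1)/(v₀*OA+1) = D := by
        rw [div_eq_iff (ne_of_gt hA0), hv0_def]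
        field_simp
        ring
      rw [h1, h2]
      have h3 : Real.logb 2 (D/t) = Real.logb 2 D - Real.logb 2 t :=
        Real.logb_div (by linarith) (ne_of_gt ht0)
      have hlt : Real.logb 2 t = -(2*Rp) := by
        rw [ht_def]; exact Real.logb_rpow (by norm_num) (by norm_num)
      rw [h3, hlt]; linarith
    · have harg : (σ2*OU*t + σ2*OA*(1-t) + 1)/(σ2*OU+1)
          = ((σ2*OA+1)/(v₀*OA+1)) / ((σ2*OU+1)/(v₀*OU+1)) := by
        rw [div_div_div_comm, div_eq_div_iff (by positivity) (by positivity), hv0_def]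
        field_simp
        ring
      rw [harg, Real.logb_div (by positivity) (by positivity)]
      ring
  · rintro x ⟨v, ⟨hv1, hv2⟩, hIp, rfl⟩
    have hvA : 0 < v*OA+1 := by nlinarith
    have hvU : 0 < v*OU+1 := by nlinarith
    have hkey : t*σ2*(v*OA+1) ≤ v*(σ2*OA+1) := by
      have h1 : Real.logb 2 (σ2/v) - Real.logb 2 ((σ2*OA+1)/(v*OA+1)) ≤ 2*Rp := by linarith
      have h2 : Real.logb 2 ((σ2/v) / ((σ2*OA+1)/(v*OA+1))) ≤ 2*Rp := by
        rw [Real.logb_div (by positivity) (by positivity)]; exact h1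
      have h3 : (σ2/v) / ((σ2*OA+1)/(v*OA+1)) ≤ (2:ℝ)^(2*Rp) :=
        (Real.logb_le_iff_le_rpow (by norm_num : (1:ℝ) < 2) (by positivity)).mp h2
      have ht2 : (2:ℝ)^(2*Rp) = t⁻¹ := by
        rw [ht_def, ← Real.rpow_neg (by norm_num), neg_neg]
      have heq : (σ2/v)/((σ2*OA+1)/(v*OA+1)) = σ2*(v*OA+1)/(v*(σ2*OA+1)) := by
        field_simp
      rw [ht2, heq] at h3
      rw [div_le_iff₀ (by positivity)] at h3
      have := mul_le_mul_of_nonneg_left h3 (le_of_lt ht0)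
      calc t*σ2*(v*OA+1) = t * (σ2*(v*OA+1)) := by ring
        _ ≤ t * (t⁻¹ * (v*(σ2*OA+1))) := this
        _ = v*(σ2*OA+1) := by rw [← mul_assoc, mul_inv_cancel₀ (ne_of_gt ht0), one_mul]
    have hnum : ((σ2*OA+1)/(v*OA+1)) / ((σ2*OU+1)/(v*OU+1))
        ≤ (σ2*OU*t + σ2*OA*(1-t) + 1)/(σ2*OU+1) := by
      have hq : ((σ2*OA+1)/(v*OA+1)) / ((σ2*OU+1)/(v*OU+1))
          = ((σ2*OA+1)*(v*OU+1))/((v*OA+1)*(σ2*OU+1)) := by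
        field_simp
      rw [hq, div_le_div_iff₀ (by positivity) (by positivity)]
      have hfac : 0 ≤ (OA - OU) * (v*(σ2*OA+1) - t*σ2*(v*OA+1)) :=
        mul_nonneg (by linarith) (by linarith)
      nlinarith [mul_pos hσ hUσ, hfac]
    have hlog := Real.logb_le_logb_of_le (by norm_num : (1:ℝ) < 2)
      (by positivity : (0:ℝ) < ((σ2*OA+1)/(v*OA+1)) / ((σ2*OU+1)/(v*OU+1))) hnum
    rw [Real.logb_div (by positivity) (by positivity)] at hlog
    linarith [hlog]
end

section
/- Let σ² > 0, R_p ≥ 0, and let 𝔸, 𝕌 be finite nonempty sets with nonnegative values O_A (A ∈ 𝔸) and O_U (U ∈ 𝕌) such that O_A ≥ O_U for all A, U. With I_p(v, A) = (1/2)·log₂(σ²/v) − (1/2)·log₂((σ²·O_A+1)/(v·O_A+1)) and I_s(v, A, U) as above, the minimax equals the maximin: min_{A∈𝔸} min_{U∈𝕌} max{I_s(v,A,U) : v ∈ (0,σ²], I_p(v,A) ≤ R_p} = max{min_{A∈𝔸} min_{U∈𝕌} I_s(v,A,U) : v ∈ (0,σ²], I_p(v,A*) ≤ R_p}, where A* minimizes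 O_A over 𝔸. -/
open Real

lemma anti_aux (σ2 v1 v2 Oa Ou : ℝ) (hσ : 0 < σ2) (h1 : 0 < v1) (h12 : v1 ≤ v2)
    (hOu : 0 ≤ Ou) (hau : Ou ≤ Oa) :
    (1/2)*Real.logb 2 ((σ2*Oa+1)/(v2*Oa+1)) - (1/2)*Real.logb 2 ((σ2*Ou+1)/(v2*Ou+1))
      ≤ (1/2)*Real.logb 2 ((σ2*Oa+1)/(v1*Oa+1)) - (1/2)*Real.logb 2 ((σ2*Ou+1)/(v1*Ou+1)) := by
  have hOa : 0 ≤ Oa := hOu.trans hau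
  have hv2 : 0 < v2 := h1.trans_le h12
  have pA : 0 < σ2*Oa+1 := by nlinarith
  have pB : 0 < σ2*Ou+1 := by nlinarith
  have p1a : 0 < v1*Oa+1 := by nlinarith
  have p1u : 0 < v1*Ou+1 := by nlinarith
  have p2a : 0 < v2*Oa+1 := by nlinarith
  have p2u : 0 < v2*Ou+1 := by nlinarith
  have hX2 : (0:ℝ) < (σ2*Oa+1)/(v2*Oa+1) := div_pos pA p2a
  have hY1 : (0:ℝ) < (σ2*Ou+1)/(v1*Ou+1) := div_pos pB p1u
  have hX1 : (0:ℝ) < (σ2*Oa+1)/(v1*Oa+1) := div_pos pA p1a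
  have hY2 : (0:ℝ) < (σ2*Ou+1)/(v2*Ou+1) := div_pos pB p2u
  have key : (σ2*Oa+1)/(v2*Oa+1) * ((σ2*Ou+1)/(v1*Ou+1))
      ≤ (σ2*Oa+1)/(v1*Oa+1) * ((σ2*Ou+1)/(v2*Ou+1)) := by
    rw [div_mul_div_comm, div_mul_div_comm, div_le_div_iff₀ (by positivity) (by positivity)]
    have key0 : (v1*Oa+1)*(v2*Ou+1) ≤ (v2*Oa+1)*(v1*Ou+1) := by
      nlinarith [mul_nonneg (sub_nonneg.2 h12) (sub_nonneg.2 hau)]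
    nlinarith [mul_le_mul_of_nonneg_left key0 (mul_pos pA pB).le]
  have hlog : Real.logb 2 ((σ2*Oa+1)/(v2*Oa+1)) + Real.logb 2 ((σ2*Ou+1)/(v1*Ou+1))
      ≤ Real.logb 2 ((σ2*Oa+1)/(v1*Oa+1)) + Real.logb 2 ((σ2*Ou+1)/(v2*Ou+1)) := by
    rw [← Real.logb_mul hX2.ne' hY1.ne', ← Real.logb_mul hX1.ne' hY2.ne']
    exact Real.logb_le_logb_of_le one_lt_two (by positivity) key
  linarith

lemma amin_aux (σ2 v O1 O2 : ℝ) (hσ : 0 < σ2) (hv : 0 < v) (hvs : v ≤ σ2)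
    (hO1 : 0 ≤ O1) (h12 : O1 ≤ O2) :
    (1/2)*Real.logb 2 ((σ2*O1+1)/(v*O1+1)) ≤ (1/2)*Real.logb 2 ((σ2*O2+1)/(v*O2+1)) := by
  have hO2 : 0 ≤ O2 := hO1.trans h12
  have p1 : 0 < v*O1+1 := by nlinarith
  have p2 : 0 < v*O2+1 := by nlinarith
  have q1 : 0 < σ2*O1+1 := by nlinarith
  have hle : (σ2*O1+1)/(v*O1+1) ≤ (σ2*O2+1)/(v*O2+1) := by
    rw [div_le_div_iff₀ p1 p2]
    nlinarith [mul_nonneg (sub_nonneg.2 hvs) (sub_nonneg.2 h12)]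
  have := Real.logb_le_logb_of_le one_lt_two (div_pos q1 p1) hle
  linarith

lemma ip_iff (σ2 v O Rp : ℝ) (hσ : 0 < σ2) (hv : 0 < v) (hO : 0 ≤ O) :
    (1/2)*Real.logb 2 (σ2/v) - (1/2)*Real.logb 2 ((σ2*O+1)/(v*O+1)) ≤ Rp
      ↔ σ2*(v*O+1) ≤ (2:ℝ)^(2*Rp) * (v*(σ2*O+1)) := by
  have p1 : 0 < v*O+1 := by nlinarith
  have q1 : 0 < σ2*O+1 := by nlinarith
  have harg : 0 < σ2*(v*O+1) / (v*(σ2*O+1)) := by positivity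
  have hrw : (1/2)*Real.logb 2 (σ2/v) - (1/2)*Real.logb 2 ((σ2*O+1)/(v*O+1))
      = (1/2) * Real.logb 2 (σ2*(v*O+1) / (v*(σ2*O+1))) := by
    rw [Real.logb_div hσ.ne' hv.ne', Real.logb_div q1.ne' p1.ne',
      Real.logb_div (by positivity) (by positivity),
      Real.logb_mul hσ.ne' p1.ne', Real.logb_mul hv.ne' q1.ne']
    ring
  rw [hrw]
  constructor
  · intro h
    have h2 : Real.logb 2 (σ2*(v*O+1) / (v*(σ2*O+1))) ≤ 2*Rp := by linarith
    have := (Real.logb_le_iff_le_rpow one_lt_two harg).mp h2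
    rw [div_le_iff₀ (by positivity)] at this
    linarith
  · intro h
    have h2 : σ2*(v*O+1) / (v*(σ2*O+1)) ≤ (2:ℝ)^(2*Rp) := by
      rw [div_le_iff₀ (by positivity)]; linarith
    have := (Real.logb_le_iff_le_rpow one_lt_two harg).mpr h2
    linarith

/-- The minimax equals the maximin: with I_p(v,A) and I_s(v,A,U) as in the Gaussian
secret-sharing converse, min over A,U of the constrained supremum of I_s equals the
supremum (over v with I_p(v,A*) ≤ R_p) of the double minimum of I_s, where A*
minimizes O_A over 𝔸. -/
theorem stmt_8 {α β : Type*} (𝔸 : Finset α) (𝕌 : Finset β) (hA : 𝔸.Nonempty) (hU : 𝕌.Nonempty)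
    (σ2 Rp : ℝ) (hσ : 0 < σ2) (hR : 0 ≤ Rp) (OA : α → ℝ) (OU : β → ℝ)
    (hOA0 : ∀ a ∈ 𝔸, 0 ≤ OA a) (hOU0 : ∀ u ∈ 𝕌, 0 ≤ OU u)
    (hge : ∀ a ∈ 𝔸, ∀ u ∈ 𝕌, OU u ≤ OA a)
    (Astar : α) (hAs : Astar ∈ 𝔸) (hAsmin : ∀ a ∈ 𝔸, OA Astar ≤ OA a)
    (Ip : ℝ → α → ℝ)
    (hIp : ∀ v a, Ip v a = (1/2) * Real.logb 2 (σ2 / v)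
        - (1/2) * Real.logb 2 ((σ2*OA a+1)/(v*OA a+1)))
    (Is : ℝ → α → β → ℝ)
    (hIs : ∀ v a u, Is v a u = (1/2) * Real.logb 2 ((σ2*OA a+1)/(v*OA a+1))
        - (1/2) * Real.logb 2 ((σ2*OU u+1)/(v*OU u+1))) :
    𝔸.inf' hA (fun a => 𝕌.inf' hU (fun u =>
        sSup {x : ℝ | ∃ v ∈ Set.Ioc (0:ℝ) σ2, Ip v a ≤ Rp ∧ x = Is v a u}))
      = sSup {x : ℝ | ∃ v ∈ Set.Ioc (0:ℝ) σ2, Ip v Astar ≤ Rp ∧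
          x = 𝔸.inf' hA (fun a => 𝕌.inf' hU (fun u => Is v a u))} := by
  set c : ℝ := (2:ℝ)^(2*Rp) with hc
  have hc1 : (1:ℝ) ≤ c := by
    calc (1:ℝ) = (2:ℝ)^(0:ℝ) := (Real.rpow_zero 2).symm
    _ ≤ (2:ℝ)^(2*Rp) := Real.rpow_le_rpow_of_exponent_le one_le_two (by linarith)
  set D : α → ℝ := fun a => σ2 * OA a * (c-1) + c with hDdef
  set vst : α → ℝ := fun a => σ2 / D a with hvstdef
  have hD : ∀ a ∈ 𝔸, 1 ≤ D a := by
    intro a ha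
    have h0 := hOA0 a ha
    simp only [hDdef]
    nlinarith [mul_nonneg (mul_nonneg hσ.le h0) (sub_nonneg.2 hc1)]
  have hDpos : ∀ a ∈ 𝔸, 0 < D a := fun a ha => lt_of_lt_of_le one_pos (hD a ha)
  have hvpos : ∀ a ∈ 𝔸, 0 < vst a := fun a ha => div_pos hσ (hDpos a ha)
  have hvle : ∀ a ∈ 𝔸, vst a ≤ σ2 := fun a ha => div_le_self hσ.le (hD a ha)
  -- Ip at vst a equals Rp (so ≤ Rp)
  have hIpv : ∀ a ∈ 𝔸, Ip (vst a) a ≤ Rp := by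
    intro a ha
    rw [hIp, ip_iff σ2 (vst a) (OA a) Rp hσ (hvpos a ha) (hOA0 a ha)]
    have hDne : D a ≠ 0 := (hDpos a ha).ne'
    have : σ2*(vst a*OA a+1) = c * (vst a*(σ2*OA a+1)) := by
      simp only [hvstdef]
      field_simp
      simp only [hDdef]
      ring
    rw [this]
  -- feasibility forces v ≥ vst a
  have hfeas : ∀ a ∈ 𝔸, ∀ v, v ∈ Set.Ioc (0:ℝ) σ2 → Ip v a ≤ Rp → vst a ≤ v := by
    intro a ha v hv hle
    rw [hIp, ip_iff σ2 v (OA a) Rp hσ hv.1 (hOA0 a ha)] at hle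
    rw [hvstdef]
    rw [div_le_iff₀ (hDpos a ha)]
    simp only [hDdef]
    nlinarith [hv.1, hOA0 a ha]
  -- antitonicity of Is in v
  have anti : ∀ a ∈ 𝔸, ∀ u ∈ 𝕌, ∀ v1 v2 : ℝ, 0 < v1 → v1 ≤ v2 → Is v2 a u ≤ Is v1 a u := by
    intro a ha u hu v1 v2 h1 h12
    rw [hIs, hIs]
    exact anti_aux σ2 v1 v2 (OA a) (OU u) hσ h1 h12 (hOU0 u hu) (hge a ha u hu)
  -- Astar minimizes Is over a, at fixed v
  have amin : ∀ a ∈ 𝔸, ∀ u ∈ 𝕌, ∀ v : ℝ, 0 < v → v ≤ σ2 → Is v Astar u ≤ Is v a u := by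
    intro a ha u hu v hv hvs
    rw [hIs, hIs]
    have := amin_aux σ2 v (OA Astar) (OA a) hσ hv hvs (hOA0 Astar hAs) (hAsmin a ha)
    linarith
  -- vst a ≤ vst Astar
  have hvst_mono : ∀ a ∈ 𝔸, vst a ≤ vst Astar := by
    intro a ha
    have hDle : D Astar ≤ D a := by
      simp only [hDdef]
      nlinarith [mul_nonneg (mul_nonneg hσ.le (sub_nonneg.2 hc1)) (sub_nonneg.2 (hAsmin a ha))]
    exact div_le_div_of_nonneg_left hσ.le (hDpos Astar hAs) hDle
  -- sup over constrained v of Is equals value at vst a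
  have hsup1 : ∀ a ∈ 𝔸, ∀ u ∈ 𝕌,
      sSup {x : ℝ | ∃ v ∈ Set.Ioc (0:ℝ) σ2, Ip v a ≤ Rp ∧ x = Is v a u}
        = Is (vst a) a u := by
    intro a ha u hu
    apply IsGreatest.csSup_eq
    constructor
    · exact ⟨vst a, ⟨hvpos a ha, hvle a ha⟩, hIpv a ha, rfl⟩
    · rintro x ⟨v, hv, hle, rfl⟩
      exact anti a ha u hu (vst a) v (hvpos a ha) (hfeas a ha v hv hle)
  have hsup2 :
      sSup {x : ℝ | ∃ v ∈ Set.Ioc (0:ℝ) σ2, Ip v Astar ≤ Rp ∧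
          x = 𝔸.inf' hA (fun a => 𝕌.inf' hU (fun u => Is v a u))}
        = 𝔸.inf' hA (fun a => 𝕌.inf' hU (fun u => Is (vst Astar) a u)) := by
    apply IsGreatest.csSup_eq
    constructor
    · exact ⟨vst Astar, ⟨hvpos Astar hAs, hvle Astar hAs⟩, hIpv Astar hAs, rfl⟩
    · rintro x ⟨v, hv, hle, rfl⟩
      apply Finset.le_inf'
      intro a ha
      apply Finset.le_inf'
      intro u hu
      calc 𝔸.inf' hA (fun a => 𝕌.inf' hU (fun u => Is v a u))
          ≤ 𝕌.inf' hU (fun u => Is v a u) := Finset.inf'_le _ ha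
        _ ≤ Is v a u := Finset.inf'_le _ hu
        _ ≤ Is (vst Astar) a u :=
            anti a ha u hu (vst Astar) v (hvpos Astar hAs) (hfeas Astar hAs v hv hle)
  -- rewrite LHS
  have hL : 𝔸.inf' hA (fun a => 𝕌.inf' hU (fun u =>
        sSup {x : ℝ | ∃ v ∈ Set.Ioc (0:ℝ) σ2, Ip v a ≤ Rp ∧ x = Is v a u}))
      = 𝔸.inf' hA (fun a => 𝕌.inf' hU (fun u => Is (vst a) a u)) := by
    apply Finset.inf'_congr hA rfl
    intro a ha
    apply Finset.inf'_congr hU rfl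
    intro u hu
    exact hsup1 a ha u hu
  rw [hL, hsup2]
  -- both sides equal 𝕌.inf' hU (fun u => Is (vst Astar) Astar u)
  have hstar_pos := hvpos Astar hAs
  have hstar_le := hvle Astar hAs
  apply le_antisymm
  · calc 𝔸.inf' hA (fun a => 𝕌.inf' hU (fun u => Is (vst a) a u))
        ≤ 𝕌.inf' hU (fun u => Is (vst Astar) Astar u) := Finset.inf'_le _ hAs
      _ ≤ 𝔸.inf' hA (fun a => 𝕌.inf' hU (fun u => Is (vst Astar) a u)) := by
          apply Finset.le_inf'
          intro a ha
          apply Finset.le_inf'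
          intro u hu
          calc 𝕌.inf' hU (fun u => Is (vst Astar) Astar u)
              ≤ Is (vst Astar) Astar u := Finset.inf'_le _ hu
            _ ≤ Is (vst Astar) a u := amin a ha u hu (vst Astar) hstar_pos hstar_le
  · apply Finset.le_inf'
    intro a ha
    apply Finset.le_inf'
    intro u hu
    calc 𝔸.inf' hA (fun a => 𝕌.inf' hU (fun u => Is (vst Astar) a u))
        ≤ 𝕌.inf' hU (fun u => Is (vst Astar) Astar u) := Finset.inf'_le _ hAs
      _ ≤ Is (vst Astar) Astar u := Finset.inf'_le _ hu
      _ ≤ Is (vst Astar) a u := amin a ha u hu (vst Astar) hstar_pos hstar_le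
      _ ≤ Is (vst a) a u :=
          anti a ha u hu (vst a) (vst Astar) (hvpos a ha) (hvst_mono a ha)
end
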